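/- For σ ≠ 0 with e'_V(σ)/σ > 0 and e''_E(F) > 0, the nonzero characteristic velocities of the viscoelastic system are λ = ±√(e''_E(F) + σ/(ρ*² e'_V(σ))), and these are real and nonzero. -/

import Mathlib

/-!
Eliminating `δv = -λ δF` and then `δF = ρ b δσ` (with `b = e'_V(σ)/σ`) from the characteristic
system leaves `δσ (1 + ρ² b (e''_E(F) - λ²)) = 0`. A nontrivial mode forces `δσ ≠ 0`, so
`λ² = e''_E(F) + 1/(ρ² b) = e''_E(F) + σ/(ρ² e'_V(σ))`, and `λ ≠ 0` makes the square root nonzero.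
-/

section CharacteristicSystem

variable {K : Type*} [Field K] {ρ a b l δv δF δσ : K}

lemma strain_eq_of_characteristic (hl : l ≠ 0) (h2 : l * δF + δv = 0)
    (h3 : l * ρ * b * δσ + δv = 0) : δF = ρ * b * δσ := by
  have : l * (ρ * b * δσ - δF) = 0 := by linear_combination h3 - h2
  linear_combination -(mul_eq_zero.mp this).resolve_left hl

lemma stress_ne_zero_of_characteristic (hl : l ≠ 0) (hnt : ¬(δv = 0 ∧ δF = 0 ∧ δσ = 0))
    (h2 : l * δF + δv = 0) (h3 : l * ρ * b * δσ + δv = 0) : δσ ≠ 0 := by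
  rintro rfl
  have hδF : δF = 0 := by simpa using strain_eq_of_characteristic hl h2 h3
  exact hnt ⟨by linear_combination h2 - l * hδF, hδF, rfl⟩

lemma characteristic_polynomial_eq_zero (hl : l ≠ 0) (hnt : ¬(δv = 0 ∧ δF = 0 ∧ δσ = 0))
    (h1 : l * ρ * δv + ρ * a * δF + δσ = 0) (h2 : l * δF + δv = 0)
    (h3 : l * ρ * b * δσ + δv = 0) : 1 + ρ ^ 2 * b * (a - l ^ 2) = 0 := by
  have hδF := strain_eq_of_characteristic hl h2 h3
  have : δσ * (1 + ρ ^ 2 * b * (a - l ^ 2)) = 0 := by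
    linear_combination h1 - l * ρ * h2 - ρ * (a - l ^ 2) * hδF
  exact (mul_eq_zero.mp this).resolve_left (stress_ne_zero_of_characteristic hl hnt h2 h3)

lemma sq_eq_of_characteristic (hl : l ≠ 0) (hnt : ¬(δv = 0 ∧ δF = 0 ∧ δσ = 0))
    (h1 : l * ρ * δv + ρ * a * δF + δσ = 0) (h2 : l * δF + δv = 0)
    (h3 : l * ρ * b * δσ + δv = 0) : l ^ 2 = a + 1 / (ρ ^ 2 * b) := by
  have hchar := characteristic_polynomial_eq_zero hl hnt h1 h2 h3
  have : l ^ 2 - a = 1 / (ρ ^ 2 * b) :=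
    eq_one_div_of_mul_eq_one_right (by linear_combination -hchar)
  linear_combination this

end CharacteristicSystem

lemma Real.eq_sqrt_or_eq_neg_sqrt_of_sq_eq {l c : ℝ} (h : l ^ 2 = c) : l = √c ∨ l = -√c :=
  eq_or_eq_neg_of_abs_eq (by rw [← h, Real.sqrt_sq_eq_abs])

lemma Real.sqrt_ne_zero_of_sq_eq {l c : ℝ} (hl : l ≠ 0) (h : l ^ 2 = c) : √c ≠ 0 := by
  rwa [← h, Real.sqrt_sq_eq_abs, abs_ne_zero]

theorem stmt_4_general (ρ : ℝ) (eE eV : ℝ → ℝ) (F σ : ℝ)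
    (l δv δF δσ : ℝ) (hl : l ≠ 0) (hnt : ¬(δv = 0 ∧ δF = 0 ∧ δσ = 0))
    (h1 : l * ρ * δv + ρ * deriv (deriv eE) F * δF + δσ = 0)
    (h2 : l * δF + δv = 0)
    (h3 : l * ρ * (deriv eV σ / σ) * δσ + δv = 0) :
    (l = Real.sqrt (deriv (deriv eE) F + σ / (ρ ^ 2 * deriv eV σ)) ∨
      l = -Real.sqrt (deriv (deriv eE) F + σ / (ρ ^ 2 * deriv eV σ))) ∧
    Real.sqrt (deriv (deriv eE) F + σ / (ρ ^ 2 * deriv eV σ)) ≠ 0 := by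
  have hsq : l ^ 2 = deriv (deriv eE) F + σ / (ρ ^ 2 * deriv eV σ) := by
    have hb : 1 / (ρ ^ 2 * (deriv eV σ / σ)) = σ / (ρ ^ 2 * deriv eV σ) := by
      rw [mul_div_assoc', one_div_div]
    rw [← hb]
    exact sq_eq_of_characteristic hl hnt h1 h2 h3
  exact ⟨Real.eq_sqrt_or_eq_neg_sqrt_of_sq_eq hsq, Real.sqrt_ne_zero_of_sq_eq hl hsq⟩

/-- for σ ≠ 0, e'_V(σ)/σ > 0 and e''_E(F) > 0, the nonzero
characteristic velocities are λ = ±√(e''_E(F) + σ/(ρ*² e'_V(σ))), real and nonzero. -/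
theorem stmt_4 (ρ : ℝ) (hρ : 0 < ρ) (eE eV : ℝ → ℝ) (F σ : ℝ) (hσ : σ ≠ 0)
    (hE : 0 < deriv (deriv eE) F) (hV : 0 < deriv eV σ / σ)
    (l δv δF δσ : ℝ) (hl : l ≠ 0) (hnt : ¬(δv = 0 ∧ δF = 0 ∧ δσ = 0))
    (h1 : l * ρ * δv + ρ * deriv (deriv eE) F * δF + δσ = 0)
    (h2 : l * δF + δv = 0)
    (h3 : l * ρ * (deriv eV σ / σ) * δσ + δv = 0) :
    (l = Real.sqrt (deriv (deriv eE) F + σ / (ρ ^ 2 * deriv eV σ)) ∨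
      l = -Real.sqrt (deriv (deriv eE) F + σ / (ρ ^ 2 * deriv eV σ))) ∧
    Real.sqrt (deriv (deriv eE) F + σ / (ρ ^ 2 * deriv eV σ)) ≠ 0 :=
  stmt_4_general ρ eE eV F σ l δv δF δσ hl hnt h1 h2 h3
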